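/- For every n ≥ 4: in any ortholattice, if the n-Go equation holds for all elements, then the (n−1)-Go equation holds for all elements. -/

import Mathlib

/-!
Given `a₀, …, aₘ₋₁`, apply the `(m + 1)`-Go law to the cycle `a₀, …, aₘ₋₁, a₀`, i.e. to `a` read
modulo `m`. Its two extra links are `a₀ → a₀ = ⊤`, so both sides collapse to those of the `m`-Go
equation for `a₀, …, aₘ₋₁`.
-/

/-- An ortholattice: a bounded lattice with an orthocomplementation. -/
class Ortholattice (α : Type*) extends Lattice α, BoundedOrder α, Compl α where
  compl_compl : ∀ a : α, aᶜᶜ = a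
  compl_le_compl : ∀ a b : α, a ≤ b → bᶜ ≤ aᶜ
  inf_compl_self : ∀ a : α, a ⊓ aᶜ = ⊥
  sup_compl_self : ∀ a : α, a ⊔ aᶜ = ⊤

/-- The Sasaki hook `a → b := a' ⊔ (a ⊓ b)`. -/
def sasaki {α : Type*} [Ortholattice α] (a b : α) : α := aᶜ ⊔ (a ⊓ b)

/-- The n-Go equation `a₁ ≡γ aₙ = aₙ ≡γ a₁` holds for all elements, where
`a₁ ≡γ aₙ = (a₁→a₂) ⊓ ⋯ ⊓ (aₙ₋₁→aₙ) ⊓ (aₙ→a₁)` and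
`aₙ ≡γ a₁ = (aₙ→aₙ₋₁) ⊓ ⋯ ⊓ (a₂→a₁) ⊓ (a₁→aₙ)`. -/
def GoLaw (α : Type*) [Ortholattice α] (n : ℕ) : Prop :=
  ∀ (hn : 3 ≤ n) (a : Fin n → α),
    (Finset.univ.inf fun i : Fin n => sasaki (a i) (a (i + ⟨1, by omega⟩))) =
      (Finset.univ.inf fun i : Fin n => sasaki (a (i + ⟨1, by omega⟩)) (a i))

theorem Fin.inf_univ_castSucc {α : Type*} [SemilatticeInf α] [OrderTop α] {m : ℕ}
    (f : Fin (m + 1) → α) :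
    Finset.univ.inf f = (Finset.univ.inf fun i : Fin m => f i.castSucc) ⊓ f (Fin.last m) := by
  rw [Fin.univ_castSuccEmb, Finset.inf_cons, Finset.inf_map, inf_comm]
  rfl

theorem Fin.ofNat_val_castSucc_add_one {m : ℕ} [NeZero m] (i : Fin m) :
    Fin.ofNat m (i.castSucc + 1 : Fin (m + 1)) = i + 1 := by
  ext
  simp [Fin.val_add]

theorem Fin.inf_univ_cycle_ofNat {α β : Type*} [SemilatticeInf α] [OrderTop α] {m : ℕ}
    [NeZero m] (g : β → β → α) (hg : ∀ x, g x x = ⊤) (a : Fin m → β) :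
    (Finset.univ.inf fun i : Fin (m + 1) =>
        g (a (Fin.ofNat m i)) (a (Fin.ofNat m (i + 1 : Fin (m + 1))))) =
      Finset.univ.inf fun i : Fin m => g (a i) (a (i + 1)) := by
  have hlast : Fin.ofNat m (Fin.last m) = Fin.ofNat m (Fin.last m + 1 : Fin (m + 1)) := by
    simp
  rw [Fin.inf_univ_castSucc, hlast, hg, inf_top_eq]
  simp only [Fin.val_castSucc, Fin.ofNat_val_eq_self, Fin.ofNat_val_castSucc_add_one]

theorem sasaki_self {α : Type*} [Ortholattice α] (a : α) : sasaki a a = ⊤ := by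
  rw [sasaki, inf_idem, sup_comm, Ortholattice.sup_compl_self]

theorem Fin.mk_one_eq_one {k : ℕ} [NeZero k] (h : 1 < k) : (⟨1, h⟩ : Fin k) = 1 :=
  Fin.ext (Nat.mod_eq_of_lt h).symm

/-- For every `n ≥ 4`, in any ortholattice the n-Go equation implies the
(n-1)-Go equation. -/
theorem stmt_10 {α : Type*} [Ortholattice α] :
    ∀ n : ℕ, 4 ≤ n → GoLaw α n → GoLaw α (n - 1) := by
  intro n hn hgo
  obtain ⟨m, rfl⟩ : ∃ m, n = m + 1 := ⟨n - 1, by omega⟩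
  have : NeZero m := ⟨by omega⟩
  rw [Nat.add_sub_cancel]
  intro _ a
  have hlong := hgo (by omega) fun i => a (Fin.ofNat m i)
  simp only [Fin.mk_one_eq_one] at hlong ⊢
  rwa [Fin.inf_univ_cycle_ofNat sasaki sasaki_self,
    Fin.inf_univ_cycle_ofNat (fun x y => sasaki y x) sasaki_self] at hlong
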